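/- arXiv:2307.00917 — 5 statements merged into one kernel-verified Lean document; each statement's English description precedes it below -/
import Mathlib

section
/- For every k ≥ 0, the graph B^θ_k obtained from θ(2,2,1) by attaching k pendant edges at one vertex of degree three satisfies λ₂(B^θ_k) < -1/2. Moreover -(n+1)/(2n) < λ₂(B^θ_k) where n = k + 4 is the number of vertices; hence λ₂(B^θ_k) → -1/2 as k → ∞. -/
open Real

/-- The `k`-th largest eigenvalue (1-indexed, with multiplicity) of a real
symmetric matrix; junk value `0` if the matrix is not Hermitian. -/
noncomputable def kthLargestEig {V : Type*} [Fintype V] [DecidableEq V]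
    (k : ℕ) (A : Matrix V V ℝ) : ℝ :=
  if h : A.IsHermitian then
    ((Finset.univ.val.map h.eigenvalues).sort (· ≤ ·)).getD (Fintype.card V - k) 0
  else 0

/-- The second largest eigenvalue of a real symmetric matrix. -/
noncomputable def lambda2 {V : Type*} [Fintype V] [DecidableEq V]
    (A : Matrix V V ℝ) : ℝ := kthLargestEig 2 A

/-- The distance matrix of a graph (entries are graph distances, as reals). -/
noncomputable def distMatrix {V : Type*} [Fintype V] (G : SimpleGraph V) :
    Matrix V V ℝ := fun u v => (G.dist u v : ℝ)

/-- A graph is chordal if every cycle of length at least 4 has a chord, i.e. an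
edge of the graph joining two vertices of the cycle that is not a cycle edge. -/
def SimpleGraph.Chordal {V : Type*} (G : SimpleGraph V) : Prop :=
  ∀ (u : V) (w : G.Walk u u), w.IsCycle → 4 ≤ w.length →
    ∃ x y, x ∈ w.support ∧ y ∈ w.support ∧ G.Adj x y ∧ s(x, y) ∉ w.edges

/-- `B^θ_k`: the graph obtained from `K₄` minus the edge `{2,3}` (vertices
`0 = w`, `1 = z` of degree 3, `2, 3` of degree 2) by attaching `k` pendant
vertices (vertices `4, …, k+3`) at `w = 0`. -/
def Btheta (k : ℕ) : SimpleGraph (Fin (k + 4)) where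
  Adj x y := x ≠ y ∧
    (((x : ℕ) < 4 ∧ (y : ℕ) < 4 ∧
        ¬(((x : ℕ) = 2 ∧ (y : ℕ) = 3) ∨ ((x : ℕ) = 3 ∧ (y : ℕ) = 2))) ∨
      ((x : ℕ) = 0 ∧ 4 ≤ (y : ℕ)) ∨ ((y : ℕ) = 0 ∧ 4 ≤ (x : ℕ)))
  symm := by
    constructor
    intro x y h
    exact ⟨h.1.symm, by tauto⟩
  loopless := by
    constructor
    intro x h
    exact h.1 rfl

/-!
Vertex `0` is adjacent to all others, so the distance matrix `D` of `B^θ_k` has off-diagonal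
entries 1 on edges and 2 elsewhere, and `D + 2I` is constant on the blocks of the partition
`{w}, {z}, {the two vertices of degree 2}, {the pendant vertices}`: `D + 2I = P F Pᵀ` with `P` the
partition matrix. Commuting `P` to the other end of the product shows that the eigenvalues of `D`
are `-2`, `k` times, and the four roots of `q(x) = x⁴ - 2k x³ - (9k+9) x² - (8k+12) x - (2k+4)`;
here `q(x) = χ(x + 2)` for `χ` the characteristic polynomial of the `4 × 4` quotient matrix
`F PᵀP`.

The sign of a monic real-rooted polynomial at `t` is the parity of the number of roots above `t`.
With `n = k + 4`, we have `q(-3/2) < 0 < q(-(n+1)/(2n))` and `q(-1/2) < 0`, so the numbers of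
roots above `-3/2`, `-(n+1)/(2n)` and `-1/2` are odd, even and odd, decrease, and are at most 4;
hence the last two are 2 and 1. These counts put `λ₂` between `-(n+1)/(2n)` and `-1/2`, and the
limit follows by squeezing.
-/

open Matrix Polynomial

theorem List.Pairwise.apply_getElem_iff_sub_le_countP {α : Type*} [Preorder α] {L : List α}
    (hL : L.Pairwise (· ≤ ·)) {p : α → Prop} [DecidablePred p] (hp : Monotone p)
    {i : ℕ} (hi : i < L.length) : p L[i] ↔ L.length - i ≤ L.countP p := by
  constructor
  · intro hpi
    have hdrop : ∀ x ∈ L.drop i, p x := by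
      intro x hx
      obtain ⟨j, hj, rfl⟩ := List.mem_iff_getElem.mp hx
      rw [List.getElem_drop]
      exact hp (hL.rel_get_of_le (a := ⟨i, hi⟩) (b := ⟨i + j, by rw [List.length_drop] at hj; omega⟩)
        (by simp [Fin.mk_le_mk])) hpi
    calc L.length - i = (L.drop i).countP p := by
          rw [List.countP_eq_length.mpr (by simpa using hdrop), List.length_drop]
      _ ≤ L.countP p := (List.drop_sublist i L).countP_le
  · intro hcount
    by_contra hpi
    have htake : (L.take (i + 1)).countP p = 0 := by
      refine List.countP_eq_zero.mpr fun x hx hpx => hpi ?_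
      obtain ⟨j, hj, rfl⟩ := List.mem_iff_getElem.mp hx
      rw [List.length_take] at hj
      rw [List.getElem_take] at hpx
      exact hp (hL.rel_get_of_le (a := ⟨j, by omega⟩) (b := ⟨i, hi⟩)
        (by simp only [Fin.mk_le_mk]; omega)) (by simpa using hpx)
    have hdrop := (L.drop (i + 1)).countP_le_length (p := p)
    rw [← List.take_append_drop (i + 1) L, List.countP_append, htake] at hcount
    simp only [List.length_drop, List.length_append, List.length_take] at hdrop hcount
    omega

section SignOfProduct

variable {K : Type*} [CommRing K] [LinearOrder K] [IsStrictOrderedRing K]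

theorem Multiset.pos_neg_one_pow_countP_mul_prod_sub (R : Multiset K) {t : K} (ht : t ∉ R) :
    0 < (-1) ^ R.countP (t < ·) * (R.map (t - ·)).prod := by
  induction R using Multiset.induction_on with
  | empty => simp
  | cons a R ih =>
    have ha : a ≠ t := fun h => ht (h ▸ Multiset.mem_cons_self a R)
    have hR := ih fun h => ht (Multiset.mem_cons_of_mem h)
    rw [Multiset.countP_cons, Multiset.map_cons, Multiset.prod_cons]
    rcases ha.lt_or_gt with hlt | hgt
    · rw [if_neg hlt.not_gt, add_zero, mul_left_comm]
      exact mul_pos (sub_pos.mpr hlt) hR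
    · rw [if_pos hgt, pow_succ]
      nlinarith

theorem Polynomial.eval_pos_iff_even_countP_roots {p : K[X]} (hp : p.Monic)
    (hroots : Multiset.card p.roots = p.natDegree) {t : K} (ht : p.eval t ≠ 0) :
    0 < p.eval t ↔ Even (p.roots.countP (t < ·)) := by
  have heval : p.eval t = (p.roots.map (t - ·)).prod := by
    conv_lhs => rw [← prod_multiset_X_sub_C_of_monic_of_roots_card_eq hp hroots]
    simp [eval_multiset_prod]
  have hpos := p.roots.pos_neg_one_pow_countP_mul_prod_sub fun h => ht (isRoot_of_mem_roots h)
  rw [← heval] at hpos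
  rcases Nat.even_or_odd (p.roots.countP (t < ·)) with he | ho
  · exact iff_of_true (by simpa [he.neg_one_pow] using hpos) he
  · rw [ho.neg_one_pow, neg_one_mul, neg_pos] at hpos
    exact iff_of_false hpos.not_gt (Nat.not_even_iff_odd.mpr ho)

end SignOfProduct

theorem apply_lambda2_iff_two_le_countP {V : Type*} [Fintype V] [DecidableEq V]
    {A : Matrix V V ℝ} (hA : A.IsHermitian) (hV : 2 ≤ Fintype.card V)
    {p : ℝ → Prop} [DecidablePred p] (hp : Monotone p) :
    p (lambda2 A) ↔ 2 ≤ (Finset.univ.val.map hA.eigenvalues).countP p := by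
  set E := Finset.univ.val.map hA.eigenvalues
  have hlen : (E.sort (· ≤ ·)).length = Fintype.card V := by simp [E]
  have hi : Fintype.card V - 2 < (E.sort (· ≤ ·)).length := by omega
  rw [lambda2, kthLargestEig, dif_pos hA, List.getD_eq_getElem _ _ hi,
    (E.pairwise_sort _).apply_getElem_iff_sub_le_countP hp hi, hlen,
    ← Multiset.coe_countP, Multiset.sort_eq]
  omega

theorem SimpleGraph.dist_eq_two_of_forall_adj {V : Type*} {G : SimpleGraph V} {w : V}
    (hw : ∀ v, v ≠ w → G.Adj w v) {u v : V} (huv : u ≠ v) (hadj : ¬ G.Adj u v) :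
    G.dist u v = 2 := by
  have hu : u ≠ w := fun h => hadj (h ▸ hw v (h ▸ huv).symm)
  have hv : v ≠ w := fun h => hadj (h ▸ (hw u (h ▸ huv)).symm)
  let walk := (hw u hu).symm.toWalk.append (hw v hv).toWalk
  have hle : G.dist u v ≤ 2 := by simpa [walk] using G.dist_le walk
  have hpos : 0 < G.dist u v := SimpleGraph.Reachable.pos_dist_of_ne ⟨walk⟩ huv
  have hne : G.dist u v ≠ 1 := fun h => hadj (SimpleGraph.dist_eq_one_iff_adj.mp h)
  omega

theorem distMatrix_eq_of_forall_adj {V : Type*} [Fintype V] [DecidableEq V]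
    {G : SimpleGraph V} [DecidableRel G.Adj] {w : V} (hw : ∀ v, v ≠ w → G.Adj w v) :
    distMatrix G = of (fun u v => if G.Adj u v then 1 else 2) - scalar V 2 := by
  ext u v
  rcases eq_or_ne u v with rfl | huv
  · simp [distMatrix]
  · by_cases hadj : G.Adj u v
    · simp [distMatrix, hadj, huv, SimpleGraph.dist_eq_one_iff_adj.mpr hadj]
    · simp [distMatrix, hadj, huv, SimpleGraph.dist_eq_two_of_forall_adj hw huv hadj]

theorem isHermitian_distMatrix {V : Type*} [Fintype V] (G : SimpleGraph V) :
    (distMatrix G).IsHermitian := by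
  ext u v
  simp [distMatrix, SimpleGraph.dist_comm]

section PartitionMatrix

variable {V W : Type*} (R : Type*) [DecidableEq W] [CommSemiring R]

def partitionMatrix (σ : V → W) : Matrix V W R := of fun v i => if σ v = i then 1 else 0

variable {R}

theorem partitionMatrix_mul_mul_transpose [Fintype W] (σ : V → W) (M : Matrix W W R) :
    partitionMatrix R σ * M * (partitionMatrix R σ)ᵀ = M.submatrix σ σ := by
  ext u v
  simp [partitionMatrix, mul_apply, ite_mul, mul_ite]

theorem transpose_partitionMatrix_mul [Fintype V] (σ : V → W) :
    (partitionMatrix R σ)ᵀ * partitionMatrix R σ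
      = diagonal fun i => ((Finset.univ.filter (σ · = i)).card : R) := by
  ext i j
  simp only [partitionMatrix, mul_apply, transpose_apply, of_apply, mul_boole, ← ite_and]
  rcases eq_or_ne i j with rfl | hij
  · simp [Finset.sum_boole]
  · rw [diagonal_apply_ne _ hij]
    exact Finset.sum_eq_zero fun x _ => if_neg fun h => hij (h.2.symm.trans h.1)

end PartitionMatrix

namespace Btheta

def vertexClass : ℕ → Fin 4
  | 0 => 0
  | 1 => 1
  | 2 => 2
  | 3 => 2
  | _ + 4 => 3

def classMatrix : Matrix (Fin 4) (Fin 4) ℝ :=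
  !![2, 1, 1, 1; 1, 2, 1, 2; 1, 1, 2, 2; 1, 2, 2, 2]

def quotientMatrix (k : ℕ) : Matrix (Fin 4) (Fin 4) ℝ :=
  !![2, 1, 2, k; 1, 2, 2, 2 * k; 1, 1, 4, 2 * k; 1, 2, 4, 2 * k]

instance (k : ℕ) : DecidableRel (Btheta k).Adj := fun _ _ =>
  inferInstanceAs (Decidable (_ ∧ _))

theorem zero_adj {k : ℕ} {v : Fin (k + 4)} (hv : v ≠ 0) : (Btheta k).Adj 0 v := by
  have h0 : ((0 : Fin (k + 4)) : ℕ) = 0 := rfl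
  have : (v : ℕ) ≠ 0 := h0 ▸ Fin.val_ne_iff.mpr hv
  exact ⟨hv.symm, by rw [h0]; omega⟩

theorem ite_adj_eq_classMatrix {k : ℕ} (u v : Fin (k + 4)) :
    (if (Btheta k).Adj u v then 1 else 2 : ℝ) = classMatrix (vertexClass u) (vertexClass v) := by
  obtain ⟨u, hu⟩ := u
  obtain ⟨v, hv⟩ := v
  simp only [Btheta, ne_eq, Fin.mk.injEq]
  rcases u with _ | _ | _ | _ | u <;> rcases v with _ | _ | _ | _ | v <;>
    simp only [vertexClass] <;> norm_num [classMatrix, cons_val_two, cons_val_three]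

theorem distMatrix_eq (k : ℕ) :
    distMatrix (Btheta k) = partitionMatrix ℝ (fun u : Fin (k + 4) => vertexClass u) *
      classMatrix * (partitionMatrix ℝ fun u : Fin (k + 4) => vertexClass u)ᵀ - scalar _ 2 := by
  rw [distMatrix_eq_of_forall_adj fun _ => zero_adj, partitionMatrix_mul_mul_transpose]
  congr 1
  ext u v
  exact ite_adj_eq_classMatrix u v

theorem card_filter_vertexClass {k : ℕ} (i : Fin 4) :
    (Finset.univ.filter fun u : Fin (k + 4) => vertexClass u = i).card = ![1, 1, 2, k] i := by
  rw [Finset.card_filter, Fin.sum_univ_eq_sum_range (fun n => if vertexClass n = i then 1 else 0),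
    add_comm, Finset.sum_range_add]
  have hpendant : ∀ x, vertexClass (4 + x) = 3 := fun x => by rw [add_comm]; rfl
  simp only [hpendant]
  fin_cases i <;> simp [Finset.sum_range_succ, vertexClass]

theorem classMatrix_mul_classSizes (k : ℕ) :
    classMatrix * diagonal (fun i => ((Finset.univ.filter
      fun u : Fin (k + 4) => vertexClass u = i).card : ℝ)) = quotientMatrix k := by
  simp only [card_filter_vertexClass]
  ext i j
  fin_cases i <;> fin_cases j <;> norm_num [classMatrix, quotientMatrix]

theorem det_scalar_sub_quotientMatrix (k : ℕ) (x : ℝ) :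
    (scalar (Fin 4) (x + 2) - quotientMatrix k).det
      = x ^ 4 - 2 * k * x ^ 3 - (9 * k + 9) * x ^ 2 - (8 * k + 12) * x - (2 * k + 4) := by
  simp [quotientMatrix, det_succ_row_zero, Fin.sum_univ_succ, Fin.succAbove]
  ring

noncomputable def quotientPoly (k : ℕ) : ℝ[X] := (quotientMatrix k).charpoly.comp (X + C 2)

theorem eval_quotientPoly (k : ℕ) (x : ℝ) : (quotientPoly k).eval x
    = x ^ 4 - 2 * k * x ^ 3 - (9 * k + 9) * x ^ 2 - (8 * k + 12) * x - (2 * k + 4) := by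
  rw [quotientPoly, eval_comp, eval_charpoly, ← det_scalar_sub_quotientMatrix]
  simp

theorem quotientPoly_monic (k : ℕ) : (quotientPoly k).Monic :=
  (charpoly_monic _).comp_X_add_C 2

theorem natDegree_quotientPoly (k : ℕ) : (quotientPoly k).natDegree = 4 := by
  simp [quotientPoly, natDegree_comp]

theorem charpoly_distMatrix (k : ℕ) :
    (distMatrix (Btheta k)).charpoly = (X + C 2) ^ k * quotientPoly k := by
  rw [distMatrix_eq, charpoly_sub_scalar, Matrix.mul_assoc, charpoly_mul_comm_of_le _ _ (by simp),
    Matrix.mul_assoc, transpose_partitionMatrix_mul, classMatrix_mul_classSizes, quotientPoly]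
  simp only [Fintype.card_fin, add_tsub_cancel_right, mul_comp, pow_comp, X_comp]

theorem eigenvalues_distMatrix (k : ℕ) :
    Finset.univ.val.map (isHermitian_distMatrix (Btheta k)).eigenvalues
      = Multiset.replicate k (-2) + (quotientPoly k).roots := by
  have h := (isHermitian_distMatrix (Btheta k)).roots_charpoly_eq_eigenvalues
  rw [charpoly_distMatrix, roots_mul (mul_ne_zero (pow_ne_zero _ (X_add_C_ne_zero 2))
    (quotientPoly_monic k).ne_zero), roots_pow, roots_X_add_C, Multiset.nsmul_singleton] at h
  simpa [RCLike.ofReal_real_eq_id] using h.symm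

theorem card_roots_quotientPoly (k : ℕ) : Multiset.card (quotientPoly k).roots = 4 := by
  have h := congrArg Multiset.card (eigenvalues_distMatrix k)
  simp only [Multiset.card_map, Finset.card_val, Finset.card_univ, Fintype.card_fin,
    Multiset.card_add, Multiset.card_replicate] at h
  omega

theorem eval_quotientPoly_pos (k : ℕ) :
    0 < (quotientPoly k).eval (-((k : ℝ) + 4 + 1) / (2 * ((k : ℝ) + 4))) := by
  set n : ℝ := k + 4 with hn
  have hn4 : 4 ≤ n := by simp [hn]
  have key : (quotientPoly k).eval (-(n + 1) / (2 * n))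
      = ((n ^ 2 - 6 * n) ^ 2 + 2 * n * (17 * n - 6) + 1) / (16 * n ^ 4) := by
    rw [eval_quotientPoly, show (k : ℝ) = n - 4 by simp [hn]]
    field_simp
    ring
  rw [key]
  apply div_pos <;> nlinarith

theorem countP_roots_quotientPoly (k : ℕ) :
    (quotientPoly k).roots.countP (-1/2 ≤ ·) = 1 ∧
    (quotientPoly k).roots.countP (-((k : ℝ) + 4 + 1) / (2 * ((k : ℝ) + 4)) < ·) = 2 := by
  set c := -((k : ℝ) + 4 + 1) / (2 * ((k : ℝ) + 4))
  set R := (quotientPoly k).roots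
  have parity {t : ℝ} (ht : (quotientPoly k).eval t ≠ 0) :=
    eval_pos_iff_even_countP_roots (quotientPoly_monic k)
      (by rw [card_roots_quotientPoly, natDegree_quotientPoly]) ht
  have hanti {s t : ℝ} (hst : s ≤ t) : R.countP (t < ·) ≤ R.countP (s < ·) := by
    simp only [Multiset.countP_eq_card_filter]
    exact Multiset.card_le_card (Multiset.monotone_filter_right _ fun r hr => hst.trans_lt hr)
  have hcard : R.countP (-3/2 < ·) ≤ 4 :=
    card_roots_quotientPoly k ▸ Multiset.countP_le_card _ _
  have hlow : R.countP (-3/2 < ·) % 2 = 1 := by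
    have h : (quotientPoly k).eval (-3/2) < 0 := by rw [eval_quotientPoly]; nlinarith
    rw [← Nat.odd_iff, ← Nat.not_even_iff_odd, ← parity h.ne]
    exact h.not_gt
  have hmid : R.countP (c < ·) % 2 = 0 := by
    rw [← Nat.even_iff, ← parity (eval_quotientPoly_pos k).ne']
    exact eval_quotientPoly_pos k
  have hhalf : (quotientPoly k).eval (-1/2) = -3/16 := by rw [eval_quotientPoly]; ring
  have hhalf_ne : (quotientPoly k).eval (-1/2) ≠ 0 := by rw [hhalf]; norm_num
  have hhigh : R.countP (-1/2 < ·) % 2 = 1 := by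
    rw [← Nat.odd_iff, ← Nat.not_even_iff_odd, ← parity hhalf_ne, hhalf]
    norm_num
  have h1 := hanti (show -3/2 ≤ c by rw [le_div_iff₀ (by positivity)]; nlinarith)
  have h2 := hanti (show c ≤ -1/2 by rw [div_le_iff₀ (by positivity)]; nlinarith)
  have hle : R.countP (-1/2 ≤ ·) = R.countP (-1/2 < ·) :=
    Multiset.countP_congr rfl fun r hr => by
      have : r ≠ -1/2 := fun h => hhalf_ne (h ▸ isRoot_of_mem_roots hr)
      simp [le_iff_lt_or_eq, this.symm]
  omega

theorem lambda2_distMatrix_mem_Ioo (k : ℕ) : lambda2 (distMatrix (Btheta k)) ∈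
    Set.Ioo (-((k : ℝ) + 4 + 1) / (2 * ((k : ℝ) + 4))) (-1/2) := by
  have hA := isHermitian_distMatrix (Btheta k)
  have hV : 2 ≤ Fintype.card (Fin (k + 4)) := by simp
  have hcount (p : ℝ → Prop) [DecidablePred p] (hp : ¬ p (-2)) :
      (Finset.univ.val.map hA.eigenvalues).countP p = (quotientPoly k).roots.countP p := by
    rw [eigenvalues_distMatrix, Multiset.countP_add, add_eq_right, Multiset.countP_eq_zero]
    exact fun a ha => Multiset.eq_of_mem_replicate ha ▸ hp
  have hnot_lt : ¬ -((k : ℝ) + 4 + 1) / (2 * ((k : ℝ) + 4)) < -2 := by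
    rw [not_lt, le_div_iff₀ (by positivity)]
    nlinarith
  obtain ⟨hhalf, hc⟩ := countP_roots_quotientPoly k
  constructor
  · refine (apply_lambda2_iff_two_le_countP hA hV fun _ _ h h' => h'.trans_le h).mpr ?_
    rw [hcount _ hnot_lt, hc]
  · rw [← not_le,
      apply_lambda2_iff_two_le_countP hA hV (p := (-1/2 ≤ ·)) fun _ _ h h' => h'.trans h,
      hcount _ (by norm_num), hhalf]
    omega

end Btheta

theorem lambda2_Btheta (k : ℕ) :
    lambda2 (distMatrix (Btheta k)) < -1/2 ∧
    -((k : ℝ) + 4 + 1) / (2 * ((k : ℝ) + 4)) < lambda2 (distMatrix (Btheta k)) ∧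
    Filter.Tendsto (fun k : ℕ => lambda2 (distMatrix (Btheta k)))
      Filter.atTop (nhds (-1/2)) := by
  have hbounds := Btheta.lambda2_distMatrix_mem_Ioo
  refine ⟨(hbounds k).2, (hbounds k).1, ?_⟩
  have hinv : Filter.Tendsto (fun k : ℕ => (2 * ((k : ℝ) + 4))⁻¹) Filter.atTop (nhds 0) :=
    tendsto_inv_atTop_zero.comp <|
      (tendsto_natCast_atTop_atTop.atTop_add tendsto_const_nhds).const_mul_atTop two_pos
  have hlower : Filter.Tendsto (fun k : ℕ => -((k : ℝ) + 4 + 1) / (2 * ((k : ℝ) + 4)))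
      Filter.atTop (nhds (-1/2)) := by
    convert (tendsto_const_nhds (x := (-1/2 : ℝ))).sub hinv using 1
    · ext k
      field_simp
      ring
    · simp
  exact tendsto_of_tendsto_of_tendsto_of_le_of_le hlower tendsto_const_nhds
    (fun k => (hbounds k).1.le) (fun k => (hbounds k).2.le)
end

section
/- For k ≥ 1, the matrix D(B^θ_k) + 2Iₙ has rank 4, so -2 is a distance eigenvalue of B^θ_k with multiplicity n − 4, where n = k + 4. -/
open Real

/-- The multiset of eigenvalues (with multiplicity) of a real symmetric matrix;
junk value `0` if the matrix is not Hermitian. -/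
noncomputable def eigMultiset {V : Type*} [Fintype V] [DecidableEq V]
    (A : Matrix V V ℝ) : Multiset ℝ :=
  if h : A.IsHermitian then Finset.univ.val.map h.eigenvalues else 0

/-!
The vertex `w` is adjacent to every other vertex, so `B^θ_k` has diameter at most 2 and
`D + 2I` has entry `1` on edges and `2` elsewhere. Adjacency only depends on which of the classes
`{w}, {z}, V₁, V₂` the endpoints lie in, so `D + 2I` arises from the invertible `4 × 4` matrix
`thetaMatrix` by repeating rows and columns, and has rank 4 once `V₂` is nonempty. By the spectral
theorem, the nullity `n - 4 = k` of `D + 2I` is the multiplicity of the eigenvalue `-2` of `D`.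
-/

namespace Matrix

theorem rank_submatrix_of_surjective {R m n m₀ n₀ : Type*} [CommSemiring R] [StrongRankCondition R]
    [Fintype n] [Fintype n₀] (A : Matrix m n R) {r : m₀ → m} {c : n₀ → n}
    (hr : Function.Surjective r) (hc : Function.Surjective c) :
    (A.submatrix r c).rank = A.rank := by
  refine le_antisymm (A.rank_submatrix_le r c) ?_
  have h := (A.submatrix r c).rank_submatrix_le (Function.surjInv hr) (Function.surjInv hc)
  rwa [submatrix_submatrix, (Function.rightInverse_surjInv hr).comp_eq_id,
    (Function.rightInverse_surjInv hc).comp_eq_id, submatrix_id_id] at h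

namespace IsHermitian

variable {n : Type*} [Fintype n] [DecidableEq n] {A : Matrix n n ℝ}

theorem rank_sub_smul_one (hA : A.IsHermitian) (μ : ℝ) :
    (A - μ • (1 : Matrix n n ℝ)).rank = Fintype.card {i // hA.eigenvalues i ≠ μ} := by
  have hdiag : A - μ • (1 : Matrix n n ℝ) =
      Unitary.conjStarAlgAut ℝ _ hA.eigenvectorUnitary (diagonal fun i => hA.eigenvalues i - μ) := by
    rw [← diagonal_sub hA.eigenvalues fun _ => μ, ← smul_one_eq_diagonal, map_sub, map_smul, map_one]
    exact congrArg (· - _) hA.spectral_theorem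
  rw [hdiag, Unitary.conjStarAlgAut_apply, ← Unitary.coe_star]
  simp [-isUnit_iff_ne_zero, -Unitary.coe_star, rank_diagonal, sub_eq_zero]

theorem count_eigMultiset_add_rank_sub_smul_one (hA : A.IsHermitian) (μ : ℝ) :
    (eigMultiset A).count μ + (A - μ • (1 : Matrix n n ℝ)).rank = Fintype.card n := by
  classical
  rw [hA.rank_sub_smul_one, eigMultiset, dif_pos hA, Multiset.count_map, Fintype.card_subtype,
    ← Finset.filter_val]
  simp_rw [eq_comm (a := μ)]
  exact Finset.card_filter_add_card_filter_not _

end IsHermitian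

end Matrix

namespace SimpleGraph

variable {V : Type*} {G : SimpleGraph V}

theorem dist_eq_two_of_forall_adj_s11 {c : V} (hc : ∀ v, v ≠ c → G.Adj v c) {u v : V} (huv : u ≠ v)
    (h : ¬G.Adj u v) : G.dist u v = 2 := by
  have hu : u ≠ c := by rintro rfl; exact h (hc v huv.symm).symm
  have hv : v ≠ c := by rintro rfl; exact h (hc u huv)
  have hedist : G.edist u v = 2 := edist_eq_two_iff.mpr ⟨huv, h, c, hc u hu, hc v hv⟩
  rw [dist, hedist]
  rfl

theorem distMatrix_isHermitian [Fintype V] (G : SimpleGraph V) : (distMatrix G).IsHermitian := by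
  ext u v
  simp [distMatrix, dist_comm]

open scoped Classical in
theorem distMatrix_add_two_smul_one_apply [Fintype V] [DecidableEq V] {c : V}
    (hc : ∀ v, v ≠ c → G.Adj v c) (u v : V) :
    (distMatrix G + (2 : ℝ) • (1 : Matrix V V ℝ)) u v = if G.Adj u v then 1 else 2 := by
  by_cases huv : u = v
  · subst huv
    simp [distMatrix]
  · by_cases h : G.Adj u v
    · simp [distMatrix, huv, h, dist_eq_one_iff_adj.mpr h]
    · simp [distMatrix, huv, h, dist_eq_two_of_forall_adj_s11 hc huv h]

end SimpleGraph

def thetaClass (k : ℕ) (u : Fin (k + 4)) : Fin 4 :=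
  if (u : ℕ) = 0 then 0 else if (u : ℕ) = 1 then 1 else if (u : ℕ) < 4 then 2 else 3

def thetaQuotient : SimpleGraph (Fin 4) :=
  SimpleGraph.fromEdgeSet {s(0, 1), s(0, 2), s(0, 3), s(1, 2)}

def thetaMatrix : Matrix (Fin 4) (Fin 4) ℝ :=
  !![2, 1, 1, 1; 1, 2, 1, 2; 1, 1, 2, 2; 1, 2, 2, 2]

theorem thetaClass_surjective {k : ℕ} (hk : 1 ≤ k) : Function.Surjective (thetaClass k) := by
  intro a
  fin_cases a
  exacts [⟨0, rfl⟩, ⟨1, rfl⟩, ⟨2, rfl⟩, ⟨⟨4, by omega⟩, by simp [thetaClass]⟩]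

theorem btheta_adj_iff {k : ℕ} (u v : Fin (k + 4)) :
    (Btheta k).Adj u v ↔ thetaQuotient.Adj (thetaClass k u) (thetaClass k v) := by
  obtain ⟨_ | _ | _ | _ | u, _⟩ := u <;> obtain ⟨_ | _ | _ | _ | v, _⟩ := v <;>
    simp +arith [Btheta, thetaClass, thetaQuotient, SimpleGraph.fromEdgeSet_adj]

theorem btheta_adj_zero {k : ℕ} (v : Fin (k + 4)) (hv : v ≠ 0) : (Btheta k).Adj v 0 := by
  refine ⟨hv, ?_⟩
  obtain ⟨_ | _ | _ | _ | v, _⟩ := v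
  · exact absurd rfl hv
  all_goals simp +arith

open scoped Classical in
theorem thetaMatrix_apply (a b : Fin 4) :
    thetaMatrix a b = if thetaQuotient.Adj a b then 1 else 2 := by
  fin_cases a <;> fin_cases b <;> simp [thetaMatrix, thetaQuotient, SimpleGraph.fromEdgeSet_adj]

theorem rank_thetaMatrix : thetaMatrix.rank = 4 := by
  have hdet : thetaMatrix.det = -3 := by
    simp [thetaMatrix, Matrix.det_succ_row_zero, Fin.sum_univ_succ, Fin.succAbove]
    norm_num
  rw [Matrix.rank_of_isUnit _ ((Matrix.isUnit_iff_isUnit_det _).mpr (by simp [hdet])),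
    Fintype.card_fin]

theorem distMatrix_btheta_add_two_smul_one (k : ℕ) :
    distMatrix (Btheta k) + (2 : ℝ) • (1 : Matrix (Fin (k + 4)) (Fin (k + 4)) ℝ) =
      thetaMatrix.submatrix (thetaClass k) (thetaClass k) := by
  classical
  ext u v
  rw [SimpleGraph.distMatrix_add_two_smul_one_apply btheta_adj_zero, Matrix.submatrix_apply,
    thetaMatrix_apply]
  simp only [btheta_adj_iff]

theorem rank_Btheta_dist_add_two (k : ℕ) (hk : 1 ≤ k) :
    (distMatrix (Btheta k) + (2 : ℝ) • (1 : Matrix (Fin (k + 4)) (Fin (k + 4)) ℝ)).rank = 4 ∧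
    Multiset.count (-2 : ℝ) (eigMultiset (distMatrix (Btheta k))) = k := by
  have hrank : (distMatrix (Btheta k) + (2 : ℝ) • (1 : Matrix (Fin (k + 4)) (Fin (k + 4)) ℝ)).rank
      = 4 := by
    rw [distMatrix_btheta_add_two_smul_one, Matrix.rank_submatrix_of_surjective _
      (thetaClass_surjective hk) (thetaClass_surjective hk), rank_thetaMatrix]
  refine ⟨hrank, ?_⟩
  have hcount := (Btheta k).distMatrix_isHermitian.count_eigMultiset_add_rank_sub_smul_one (-2)
  rw [neg_smul, sub_neg_eq_add, hrank, Fintype.card_fin] at hcount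
  omega
end

section
/- The characteristic polynomial of the quotient matrix Q = [[2,1,2,n−4],[1,2,2,2(n−4)],[1,1,4,2(n−4)],[1,2,4,2(n−4)]] is f(λ) = λ⁴ − 2nλ³ + 3(n+1)λ² + 4(n−6)λ − 6n + 24, and for n ≥ 5 its second largest real root λ⁽²⁾ satisfies (3n−1)/(2n) < λ⁽²⁾ < 3/2. -/
open Polynomial Matrix

set_option maxHeartbeats 1000000 in
theorem charpoly_and_second_root_Btheta_quotient (n : ℕ) (hn : 5 ≤ n) :
    (∀ x : ℝ,
      (Matrix.charpoly
        (!![2, 1, 2, (n : ℝ) - 4;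
            1, 2, 2, 2 * ((n : ℝ) - 4);
            1, 1, 4, 2 * ((n : ℝ) - 4);
            1, 2, 4, 2 * ((n : ℝ) - 4)] : Matrix (Fin 4) (Fin 4) ℝ)).eval x =
        x ^ 4 - 2 * n * x ^ 3 + 3 * ((n : ℝ) + 1) * x ^ 2 + 4 * ((n : ℝ) - 6) * x
          - 6 * n + 24) ∧
    (∃ x y : ℝ,
      x ^ 4 - 2 * n * x ^ 3 + 3 * ((n : ℝ) + 1) * x ^ 2 + 4 * ((n : ℝ) - 6) * x
          - 6 * n + 24 = 0 ∧
      y ^ 4 - 2 * n * y ^ 3 + 3 * ((n : ℝ) + 1) * y ^ 2 + 4 * ((n : ℝ) - 6) * y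
          - 6 * n + 24 = 0 ∧
      x < y ∧
      (∀ z : ℝ,
        z ^ 4 - 2 * n * z ^ 3 + 3 * ((n : ℝ) + 1) * z ^ 2 + 4 * ((n : ℝ) - 6) * z
            - 6 * n + 24 = 0 → z ≤ x ∨ z = y) ∧
      (3 * (n : ℝ) - 1) / (2 * n) < x ∧ x < 3 / 2) := by
  constructor
  · intro x
    set M : Matrix (Fin 4) (Fin 4) ℝ :=
      !![2, 1, 2, (n : ℝ) - 4;
         1, 2, 2, 2 * ((n : ℝ) - 4);
         1, 1, 4, 2 * ((n : ℝ) - 4);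
         1, 2, 4, 2 * ((n : ℝ) - 4)] with hM
    have h1 : (Matrix.charpoly M).eval x = ((charmatrix M).map (eval x)).det := by
      rw [Matrix.charpoly]
      show (evalRingHom x) (charmatrix M).det = _
      rw [RingHom.map_det]
      rfl
    rw [h1]
    have h2 : (charmatrix M).map (eval x) =
      !![x - 2, -1, -2, -((n:ℝ) - 4);
         -1, x - 2, -2, -(2*((n:ℝ) - 4));
         -1, -1, x - 4, -(2*((n:ℝ) - 4));
         -1, -2, -4, x - 2*((n:ℝ) - 4)] := by
      ext i j
      fin_cases i <;> fin_cases j <;>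
        simp [charmatrix_apply_eq, charmatrix_apply_ne, hM, Matrix.vecHead, Matrix.vecTail]
    rw [h2, Matrix.det_succ_row_zero]
    simp (config := { decide := true }) [Fin.sum_univ_succ, Matrix.det_fin_three, Fin.succAbove,
      Fin.isValue, Matrix.vecHead, Matrix.vecTail, show Fin.castSucc 2 = (2 : Fin 4) from rfl]
    norm_num [Matrix.vecHead, Matrix.vecTail]
    ring
  ·
    have hN : (5:ℝ) ≤ (n:ℝ) := by exact_mod_cast hn
    set N : ℝ := (n : ℝ) with hNdef
    have hN0 : (0:ℝ) < N := by linarith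
    set F : ℝ → ℝ := fun z => z ^ 4 - 2 * N * z ^ 3 + 3 * (N + 1) * z ^ 2 + 4 * (N - 6) * z
            - 6 * N + 24 with hF
    have hcont : Continuous F := by fun_prop
    set c : ℝ := (3 * N - 1) / (2 * N) with hc
    -- sign values
    have hF0 : F 0 < 0 := by simp only [hF]; norm_num; nlinarith
    have hFc : 0 < F c := by
      have hFc' : F c = (N^4 - 12*N^3 + 70*N^2 - 12*N + 1) / (16 * N^4) := by
        simp only [hF, hc]
        field_simp
        ring
      rw [hFc']
      apply div_pos
      · nlinarith [sq_nonneg (N - 6), sq_nonneg N]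
      · positivity
    have hF32 : F (3/2) < 0 := by simp only [hF]; norm_num; linarith
    have hF7 : F 7 < 0 := by simp only [hF]; nlinarith
    have hFneg : 0 < F (-(2*N)) := by simp only [hF]; nlinarith
    have hFpos : 0 < F (2*N) := by simp only [hF]; nlinarith
    -- useful inequalities between the sample points
    have hc1 : (1:ℝ) ≤ c := by
      rw [hc, le_div_iff₀ (by linarith)]; linarith
    have hc32 : c < 3/2 := by
      rw [hc, div_lt_iff₀ (by linarith)]; linarith
    -- four roots by IVT
    obtain ⟨a, haI, haF⟩ := intermediate_value_Icc' (by linarith : -(2*N) ≤ (0:ℝ))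
      hcont.continuousOn ⟨hF0.le, hFneg.le⟩
    obtain ⟨b, hbI, hbF⟩ := intermediate_value_Icc (by linarith : (0:ℝ) ≤ c)
      hcont.continuousOn ⟨hF0.le, hFc.le⟩
    obtain ⟨x, hxI, hxF⟩ := intermediate_value_Icc' (by linarith : c ≤ 3/2)
      hcont.continuousOn ⟨hF32.le, hFc.le⟩
    obtain ⟨y, hyI, hyF⟩ := intermediate_value_Icc (by linarith : (7:ℝ) ≤ 2*N)
      hcont.continuousOn ⟨hF7.le, hFpos.le⟩
    obtain ⟨ha1, ha2⟩ := haI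
    obtain ⟨hb1, hb2⟩ := hbI
    obtain ⟨hx1, hx2⟩ := hxI
    obtain ⟨hy1, hy2⟩ := hyI
    -- strict separations
    have ha0 : a < 0 := lt_of_le_of_ne ha2 (fun h => by rw [h] at haF; linarith [haF ▸ hF0])
    have hb0 : 0 < b := lt_of_le_of_ne hb1 (fun h => by rw [← h] at hbF; linarith)
    have hbc : b < c := lt_of_le_of_ne hb2 (fun h => by rw [h] at hbF; linarith)
    have hcx : c < x := lt_of_le_of_ne hx1 (fun h => by rw [← h] at hxF; linarith)
    have hx32 : x < 3/2 := lt_of_le_of_ne hx2 (fun h => by rw [h] at hxF; linarith)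
    have h7y : 7 < y := lt_of_le_of_ne hy1 (fun h => by rw [← h] at hyF; linarith)
    have hab : a < b := lt_trans ha0 hb0
    have hbx : b < x := lt_trans hbc hcx
    have hxy : x < y := by linarith
    -- the polynomial
    set p : Polynomial ℝ := X^4 + C (-(2*N)) * X^3 + C (3*(N+1)) * X^2 + C (4*(N-6)) * X
        + C (24 - 6*N) with hp
    have hpe : ∀ z : ℝ, p.eval z = F z := by
      intro z; simp only [hp, hF, eval_add, eval_mul, eval_pow, eval_X, eval_C]; ring
    have hdeg : p.natDegree = 4 := by
      rw [hp]; compute_degree!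
    have hp0 : p ≠ 0 := fun h => by simp [h] at hdeg
    have hmem : ∀ z : ℝ, F z = 0 → z ∈ p.roots.toFinset := by
      intro z hz
      rw [Multiset.mem_toFinset, mem_roots hp0]
      exact (hpe z).trans hz
    -- finset of four roots
    have hane : a ≠ b := ne_of_lt hab
    set S : Finset ℝ := {a, b, x, y} with hS
    have hScard : S.card = 4 := by
      rw [hS]
      rw [Finset.card_insert_of_notMem (by simp; constructor; exact hab.ne; constructor; linarith; linarith)]
      rw [Finset.card_insert_of_notMem (by simp; constructor; linarith; linarith)]
      rw [Finset.card_insert_of_notMem (by simp; linarith)]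
      simp
    have hsub : S ⊆ p.roots.toFinset := by
      intro z hz
      rw [hS] at hz
      simp only [Finset.mem_insert, Finset.mem_singleton] at hz
      rcases hz with rfl | rfl | rfl | rfl
      · exact hmem _ haF
      · exact hmem _ hbF
      · exact hmem _ hxF
      · exact hmem _ hyF
    have hcard4 : p.roots.toFinset.card ≤ 4 := by
      calc p.roots.toFinset.card ≤ Multiset.card p.roots := p.roots.toFinset_card_le
      _ ≤ p.natDegree := p.card_roots'
      _ = 4 := hdeg
    have hSeq : S = p.roots.toFinset := Finset.eq_of_subset_of_card_le hsub (by omega)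
    refine ⟨x, y, hxF, hyF, hxy, ?_, by rw [hc] at hcx; exact_mod_cast hcx, hx32⟩
    intro z hz
    have hzS : z ∈ S := hSeq ▸ hmem z hz
    rw [hS] at hzS
    simp only [Finset.mem_insert, Finset.mem_singleton] at hzS
    rcases hzS with rfl | rfl | rfl | rfl
    · left; linarith
    · left; linarith
    · exact Or.inl le_rfl
    · exact Or.inr rfl
end

section
/- For the split graph SP^t with t vertices in the pendant independent part (n = t + 5 vertices total), the quotient matrix Q = [[1,2t,1,1,2],[4,2(t−1),1,2,2],[2,t,0,1,1],[2,2t,1,0,1],[4,2t,1,1,0]] has characteristic polynomial f(λ) = λ⁵ − (2t−1)λ⁴ − (15t+17)λ³ − (33t+49)λ² − (23t+44)λ − 5t − 12, and for all sufficiently large t its second largest real root lies strictly between −(t+1)/(2t) and −1/2. -/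
/-! Write `f = spPoly t`. For `t ≥ 150`, `f(-(t+1)/(2t)) > 0 > f(-1/2)`, so `f` has a largest root `x`
in `(-(t+1)/(2t), -1/2)`. Beyond `-1/2` there is exactly one more root: `f < 0` on `[-1/2, 2t]`,
`f` is strictly increasing on `[2t, ∞)` and `f(3t) > 0`. Hence `x` is the second largest root. -/

open Set

theorem exists_greatest_zero_mem_Ioo {f : ℝ → ℝ} {a b : ℝ} (hab : a ≤ b)
    (hf : ContinuousOn f (Icc a b)) (ha : 0 < f a) (hb : f b < 0) :
    ∃ x ∈ Ioo a b, f x = 0 ∧ ∀ z ∈ Icc a b, f z = 0 → z ≤ x := by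
  set S := Icc a b ∩ f ⁻¹' {0}
  have hS : IsCompact S := isCompact_Icc.of_isClosed_subset
    (hf.preimage_isClosed_of_isClosed isClosed_Icc isClosed_singleton) inter_subset_left
  obtain ⟨c, hc, hfc⟩ := intermediate_value_Icc' hab hf ⟨hb.le, ha.le⟩
  obtain ⟨x, ⟨hx, hfx⟩, hmax⟩ := hS.exists_isGreatest ⟨c, hc, hfc⟩
  have hfx : f x = 0 := hfx
  refine ⟨x, ⟨hx.1.lt_of_ne ?_, hx.2.lt_of_ne ?_⟩, hfx, fun z hz hfz => hmax ⟨hz, hfz⟩⟩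
  · rintro rfl; linarith
  · rintro rfl; linarith

/-- The quotient of the distance matrix of `SP^t` by the equitable partition
`({a, b}, {x₁, …, x_t}, {u}, {v}, {w})`. -/
def spQuotient (t : ℝ) : Matrix (Fin 5) (Fin 5) ℝ :=
  !![1, 2 * t, 1, 1, 2;
     4, 2 * (t - 1), 1, 2, 2;
     2, t, 0, 1, 1;
     2, 2 * t, 1, 0, 1;
     4, 2 * t, 1, 1, 0]

def spPoly (t x : ℝ) : ℝ :=
  x ^ 5 - (2 * t - 1) * x ^ 4 - (15 * t + 17) * x ^ 3 - (33 * t + 49) * x ^ 2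
    - (23 * t + 44) * x - 5 * t - 12

theorem eval_charpoly_spQuotient (t x : ℝ) : (spQuotient t).charpoly.eval x = spPoly t x := by
  rw [Matrix.charpoly, ← Polynomial.coe_evalRingHom, RingHom.map_det]
  have h : (Polynomial.evalRingHom x).mapMatrix (spQuotient t).charmatrix =
      !![x - 1, -(2 * t), -1, -1, -2;
         -4, x - 2 * (t - 1), -1, -2, -2;
         -2, -t, x, -1, -1;
         -2, -(2 * t), -1, x, -1;
         -4, -(2 * t), -1, -1, x] := by
    ext i j
    fin_cases i <;> fin_cases j <;> simp [spQuotient]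
  rw [h]
  simp [Matrix.det_succ_row_zero, Fin.sum_univ_succ, Fin.succAbove, spPoly]
  ring

theorem continuous_spPoly (t : ℝ) : Continuous (spPoly t) := by
  unfold spPoly; fun_prop

theorem spPoly_neg_one_div_two (t : ℝ) : spPoly t (-1 / 2) = -3 / 32 := by
  simp only [spPoly]; ring

theorem spPoly_neg_add_one_div_two_mul_pos (t : ℝ) (ht : 150 ≤ t) :
    0 < spPoly t (-(t + 1) / (2 * t)) := by
  have ht0 : 0 < t := by linarith
  have hscaled : (2 * t) ^ 5 * spPoly t (-(t + 1) / (2 * t)) =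
      t ^ 5 + 19 * t ^ 4 - 142 * t ^ 3 + 62 * t ^ 2 - 3 * t - 1 := by
    simp only [spPoly]; field_simp; ring
  have hpos : 0 < t ^ 5 + 19 * t ^ 4 - 142 * t ^ 3 + 62 * t ^ 2 - 3 * t - 1 := by
    nlinarith [pow_pos ht0 3, pow_pos ht0 4, mul_nonneg (pow_pos ht0 3).le (sub_nonneg.2 ht)]
  have h2 : 0 < (2 * t) ^ 5 := by positivity
  exact pos_of_mul_pos_right (hscaled ▸ hpos) h2.le

theorem spPoly_neg_of_mem_Icc {t z : ℝ} (ht : 0 ≤ t) (hz : z ∈ Icc (-1 / 2) (2 * t)) :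
    spPoly t z < 0 := by
  obtain ⟨hz₁, hz₂⟩ := hz
  rcases le_total z 0 with hz₀ | hz₀
  · have hsplit : spPoly t z = (z + 1) * (z ^ 4 - 17 * z ^ 2 - 32 * z - 12)
        - t * ((2 * z + 1) * (z ^ 3 + 7 * z ^ 2 + 13 * z + 5)) := by
      simp only [spPoly]; ring
    have hquartic : z ^ 4 - 17 * z ^ 2 - 32 * z - 12 < 0 := by
      nlinarith [mul_nonneg (by linarith : (0:ℝ) ≤ z + 1 / 2) (by linarith : (0:ℝ) ≤ -z)]
    have hcubic : 0 ≤ (2 * z + 1) * (z ^ 3 + 7 * z ^ 2 + 13 * z + 5) :=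
      mul_nonneg (by linarith) (by nlinarith)
    rw [hsplit]
    nlinarith [mul_nonneg ht hcubic]
  · simp only [spPoly]
    nlinarith [mul_nonneg (pow_nonneg hz₀ 4) (by linarith : (0:ℝ) ≤ 2 * t - z),
      mul_nonneg (pow_nonneg hz₀ 3) (by linarith : (0:ℝ) ≤ 2 * t - z),
      pow_nonneg hz₀ 3, pow_nonneg hz₀ 2]

theorem spPoly_three_mul_pos (t : ℝ) (ht : 150 ≤ t) : 0 < spPoly t (3 * t) := by
  have ht0 : 0 < t := by linarith
  simp only [spPoly]
  nlinarith [pow_pos ht0 3, pow_pos ht0 4, mul_nonneg (pow_pos ht0 4).le (sub_nonneg.2 ht)]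

theorem hasDerivAt_spPoly (t z : ℝ) : HasDerivAt (spPoly t)
    (5 * z ^ 4 - (2 * t - 1) * (4 * z ^ 3) - (15 * t + 17) * (3 * z ^ 2)
      - (33 * t + 49) * (2 * z) - (23 * t + 44)) z := by
  have := (((((((hasDerivAt_pow 5 z).sub ((hasDerivAt_pow 4 z).const_mul (2 * t - 1))).sub
    ((hasDerivAt_pow 3 z).const_mul (15 * t + 17))).sub
    ((hasDerivAt_pow 2 z).const_mul (33 * t + 49))).sub
    ((hasDerivAt_id z).const_mul (23 * t + 44))).sub_const (5 * t)).sub_const 12)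
  exact this.congr_deriv (by norm_num)

theorem strictMonoOn_spPoly (t : ℝ) (ht : 150 ≤ t) : StrictMonoOn (spPoly t) (Ici (2 * t)) := by
  refine strictMonoOn_of_deriv_pos (convex_Ici _) (continuous_spPoly t).continuousOn ?_
  intro z hz
  rw [interior_Ici] at hz
  have hz : 2 * t < z := hz
  rw [(hasDerivAt_spPoly t z).deriv]
  have hz0 : 0 < z := by linarith
  nlinarith [mul_nonneg (pow_pos hz0 3).le (by linarith : (0:ℝ) ≤ z - 2 * t),
    mul_pos (mul_pos (by linarith : (0:ℝ) < t) hz0) hz0,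
    mul_pos (by linarith : (0:ℝ) < t) hz0, pow_pos hz0 3, pow_pos hz0 2]

theorem exists_second_largest_root_spPoly (t : ℝ) (ht : 150 ≤ t) :
    ∃ x y : ℝ, spPoly t x = 0 ∧ spPoly t y = 0 ∧ x < y ∧
      (∀ z, spPoly t z = 0 → z ≤ x ∨ z = y) ∧ -(t + 1) / (2 * t) < x ∧ x < -1 / 2 := by
  have ht0 : 0 < t := by linarith
  have hcont {a b : ℝ} : ContinuousOn (spPoly t) (Icc a b) := (continuous_spPoly t).continuousOn
  have hab : -(t + 1) / (2 * t) ≤ -1 / 2 := by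
    rw [div_le_iff₀ (by positivity)]; linarith
  obtain ⟨x, ⟨hax, hxb⟩, hx, hx_max⟩ := exists_greatest_zero_mem_Ioo hab hcont
    (spPoly_neg_add_one_div_two_mul_pos t ht) (by rw [spPoly_neg_one_div_two]; norm_num)
  obtain ⟨y, ⟨hty, -⟩, hy⟩ := intermediate_value_Ioo (by linarith : 2 * t ≤ 3 * t) hcont
    ⟨spPoly_neg_of_mem_Icc ht0.le ⟨by linarith, le_rfl⟩, spPoly_three_mul_pos t ht⟩
  refine ⟨x, y, hx, hy, by linarith, fun z hz => ?_, hax, hxb⟩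
  rcases le_or_gt z x with hzx | hxz
  · exact Or.inl hzx
  have hz_half : -1 / 2 < z := lt_of_not_ge fun h => (hx_max z ⟨by linarith, h⟩ hz).not_gt hxz
  have htz : 2 * t < z :=
    lt_of_not_ge fun h => (spPoly_neg_of_mem_Icc ht0.le ⟨hz_half.le, h⟩).ne hz
  exact Or.inr ((strictMonoOn_spPoly t ht).injOn htz.le hty.le (hz.trans hy.symm))

theorem charpoly_and_second_root_SP_quotient :
    (∀ t : ℕ, ∀ x : ℝ,
      (Matrix.charpoly
        (!![1, 2 * (t : ℝ), 1, 1, 2;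
            4, 2 * ((t : ℝ) - 1), 1, 2, 2;
            2, (t : ℝ), 0, 1, 1;
            2, 2 * (t : ℝ), 1, 0, 1;
            4, 2 * (t : ℝ), 1, 1, 0] : Matrix (Fin 5) (Fin 5) ℝ)).eval x =
        x ^ 5 - (2 * (t : ℝ) - 1) * x ^ 4 - (15 * (t : ℝ) + 17) * x ^ 3
          - (33 * (t : ℝ) + 49) * x ^ 2 - (23 * (t : ℝ) + 44) * x
          - 5 * (t : ℝ) - 12) ∧
    (∃ T : ℕ, ∀ t : ℕ, T ≤ t →
      ∃ x y : ℝ,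
        x ^ 5 - (2 * (t : ℝ) - 1) * x ^ 4 - (15 * (t : ℝ) + 17) * x ^ 3
          - (33 * (t : ℝ) + 49) * x ^ 2 - (23 * (t : ℝ) + 44) * x
          - 5 * (t : ℝ) - 12 = 0 ∧
        y ^ 5 - (2 * (t : ℝ) - 1) * y ^ 4 - (15 * (t : ℝ) + 17) * y ^ 3
          - (33 * (t : ℝ) + 49) * y ^ 2 - (23 * (t : ℝ) + 44) * y
          - 5 * (t : ℝ) - 12 = 0 ∧
        x < y ∧
        (∀ z : ℝ,
          z ^ 5 - (2 * (t : ℝ) - 1) * z ^ 4 - (15 * (t : ℝ) + 17) * z ^ 3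
            - (33 * (t : ℝ) + 49) * z ^ 2 - (23 * (t : ℝ) + 44) * z
            - 5 * (t : ℝ) - 12 = 0 → z ≤ x ∨ z = y) ∧
        -((t : ℝ) + 1) / (2 * (t : ℝ)) < x ∧ x < -1/2) :=
  ⟨fun t x => eval_charpoly_spQuotient t x,
    150, fun t ht => exists_second_largest_root_spPoly t (by exact_mod_cast ht)⟩
end

section
/- In a split graph G with maximum clique K_s (s ≥ 3), independent set I, and λ₂(G) < -1/2, there is at most one vertex z ∈ I with at least two neighbors in K_s. -/
open Real

/-!
Suppose two vertices `z₁ ≠ z₂` of `I` both have two neighbours in the maximum clique `K`.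
Maximality gives each of them a non-neighbour in `K`. A few vertices around `z₁, z₂` then have
one of three distance patterns: `z₁, z₂` have nested neighbourhoods in `K`; or they have
private neighbours in `K` and a common neighbour (`d(z₁, z₂) = 2`); or no common neighbour
(`d(z₁, z₂) = 3`). In each pattern the principal submatrix `M` of the distance matrix has a
coordinate vector `x` and a vector `y ⟂ x` with `x ⬝ M y = 0` and both Rayleigh quotients at
least `-1/2`. Some nonzero combination of `x` and `y` is orthogonal to the top eigenvector, so by
the spectral theorem `λ₂ ≥ -1/2`.
-/

open Matrix Module RealInnerProductSpace

namespace LinearMap.IsSymmetric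

variable {E : Type*} [NormedAddCommGroup E] [InnerProductSpace ℝ E] [FiniteDimensional ℝ E]
  {T : E →ₗ[ℝ] E} {n : ℕ}

theorem inner_map_self_le_eigenvalues_mul_norm_sq (hT : T.IsSymmetric) (hn : finrank ℝ E = n)
    {k : Fin n} {x : E} (hx : ∀ j < k, ⟪hT.eigenvectorBasis hn j, x⟫ = 0) :
    ⟪T x, x⟫ ≤ hT.eigenvalues hn k * ‖x‖ ^ 2 := by
  set b := hT.eigenvectorBasis hn
  have hTx (j : Fin n) : ⟪b j, T x⟫ = hT.eigenvalues hn j * ⟪b j, x⟫ := by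
    simpa [b, OrthonormalBasis.repr_apply_apply] using hT.eigenvectorBasis_apply_self_apply hn x j
  calc ⟪T x, x⟫ = ∑ j, hT.eigenvalues hn j * ⟪b j, x⟫ ^ 2 := by
        rw [← b.sum_inner_mul_inner]
        congr! 1 with j
        rw [real_inner_comm, hTx]; ring
    _ ≤ ∑ j, hT.eigenvalues hn k * ⟪b j, x⟫ ^ 2 := by
        refine Finset.sum_le_sum fun j _ => ?_
        rcases lt_or_ge j k with hjk | hkj
        · simp [hx j hjk]
        · exact mul_le_mul_of_nonneg_right (hT.eigenvalues_antitone hn hkj) (sq_nonneg _)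
    _ = hT.eigenvalues hn k * ‖x‖ ^ 2 := by
        rw [← Finset.mul_sum, ← b.sum_sq_norm_inner_right]
        simp

theorem le_eigenvalues_one_of_orthogonal (hT : T.IsSymmetric) (hn : finrank ℝ E = n)
    (h1 : 1 < n) {x y : E} {c : ℝ} (hx : x ≠ 0) (hy : y ≠ 0) (hxy : ⟪x, y⟫ = 0)
    (hTxy : ⟪T x, y⟫ = 0) (hcx : c * ‖x‖ ^ 2 ≤ ⟪T x, x⟫) (hcy : c * ‖y‖ ^ 2 ≤ ⟪T y, y⟫) :
    c ≤ hT.eigenvalues hn ⟨1, h1⟩ := by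
  -- the eigenvalues are sorted decreasingly, so `u` is an eigenvector for the top eigenvalue
  set u := hT.eigenvectorBasis hn ⟨0, by omega⟩
  obtain ⟨α, β, hαβ, hu⟩ : ∃ α β : ℝ, (α ≠ 0 ∨ β ≠ 0) ∧ ⟪u, α • x + β • y⟫ = 0 := by
    by_cases hux : ⟪u, x⟫ = 0
    · exact ⟨1, 0, by simp, by simp [hux]⟩
    · refine ⟨⟪u, y⟫, -⟪u, x⟫, Or.inr (neg_ne_zero.mpr hux), ?_⟩
      simp only [inner_add_right, inner_smul_right]; ring
  set v := α • x + β • y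
  have hyx : ⟪y, x⟫ = 0 := by rw [real_inner_comm]; exact hxy
  have hTyx : ⟪T y, x⟫ = 0 := by rw [hT, real_inner_comm]; exact hTxy
  have hv : ‖v‖ ^ 2 = α ^ 2 * ‖x‖ ^ 2 + β ^ 2 * ‖y‖ ^ 2 := by
    simp only [v, ← real_inner_self_eq_norm_sq, inner_add_left, inner_add_right,
      inner_smul_left, inner_smul_right, hxy, hyx, RCLike.conj_to_real]; ring
  have hTv : ⟪T v, v⟫ = α ^ 2 * ⟪T x, x⟫ + β ^ 2 * ⟪T y, y⟫ := by
    simp only [v, map_add, map_smul, inner_add_left, inner_add_right,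
      inner_smul_left, inner_smul_right, hTxy, hTyx, RCLike.conj_to_real]; ring
  have hv0 : 0 < ‖v‖ ^ 2 := by
    rw [hv]
    have := norm_pos_iff.mpr hx
    have := norm_pos_iff.mpr hy
    rcases hαβ with h | h <;> positivity
  have hle : ⟪T v, v⟫ ≤ hT.eigenvalues hn ⟨1, h1⟩ * ‖v‖ ^ 2 :=
    hT.inner_map_self_le_eigenvalues_mul_norm_sq hn fun j hj => by
      rwa [show j = ⟨0, by omega⟩ from Fin.ext (by simp [Fin.lt_def] at hj; omega)]
  refine le_of_mul_le_mul_right ?_ hv0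
  calc c * ‖v‖ ^ 2 = α ^ 2 * (c * ‖x‖ ^ 2) + β ^ 2 * (c * ‖y‖ ^ 2) := by rw [hv]; ring
    _ ≤ α ^ 2 * ⟪T x, x⟫ + β ^ 2 * ⟪T y, y⟫ := by gcongr
    _ = ⟪T v, v⟫ := hTv.symm
    _ ≤ hT.eigenvalues hn ⟨1, h1⟩ * ‖v‖ ^ 2 := hle

end LinearMap.IsSymmetric

section ExtendByZero

variable {ι V R : Type*} [Fintype ι] [Fintype V] [NonUnitalNonAssocSemiring R] {p : ι → V}

theorem Function.Injective.extend_dotProduct (hp : p.Injective) (x : ι → R) (w : V → R) :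
    Function.extend p x 0 ⬝ᵥ w = x ⬝ᵥ (w ∘ p) :=
  (Fintype.sum_of_injective p hp _ _
    (fun v hv => by simp [Function.extend_apply' _ _ _ (by simpa using hv)])
    (fun i => by simp [hp.extend_apply])).symm

theorem Function.Injective.dotProduct_extend (hp : p.Injective) (w : V → R) (x : ι → R) :
    w ⬝ᵥ Function.extend p x 0 = (w ∘ p) ⬝ᵥ x :=
  (Fintype.sum_of_injective p hp _ _
    (fun v hv => by simp [Function.extend_apply' _ _ _ (by simpa using hv)])
    (fun i => by simp [hp.extend_apply])).symm

theorem Function.Injective.extend_dotProduct_mulVec_extend (hp : p.Injective)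
    (B : Matrix V V R) (x y : ι → R) :
    Function.extend p x 0 ⬝ᵥ B *ᵥ Function.extend p y 0 = x ⬝ᵥ B.submatrix p p *ᵥ y := by
  rw [hp.extend_dotProduct]
  congr 1; ext i
  exact hp.dotProduct_extend _ y

end ExtendByZero

namespace Matrix.IsHermitian

variable {V : Type*} [Fintype V] [DecidableEq V] {A : Matrix V V ℝ}

theorem lambda2_eq_eigenvalues₀ (hA : A.IsHermitian) (h1 : 1 < Fintype.card V) :
    lambda2 A = hA.eigenvalues₀ ⟨1, h1⟩ := by
  have hsort : (Finset.univ.val.map hA.eigenvalues).sort (· ≤ ·) =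
      (List.ofFn hA.eigenvalues₀).reverse := by
    have hmap : Finset.univ.val.map hA.eigenvalues = Finset.univ.val.map hA.eigenvalues₀ := by
      rw [show hA.eigenvalues = hA.eigenvalues₀ ∘ _ from rfl, ← Multiset.map_map]
      simp
    rw [hmap, Fin.univ_val_map, ← Multiset.coe_reverse, Multiset.coe_sort]
    apply List.mergeSort_of_pairwise
    simp only [decide_eq_true_eq, List.pairwise_reverse]
    exact hA.eigenvalues₀_antitone.sortedGE_ofFn.pairwise
  rw [lambda2, kthLargestEig, dif_pos hA, hsort, List.getD_eq_getElem _ _ (by simp; omega),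
    List.getElem_reverse, List.getElem_ofFn]
  congr 1; ext; simp; omega

theorem le_lambda2_of_orthogonal (hA : A.IsHermitian) {x y : V → ℝ} {c : ℝ} (hx : x ≠ 0)
    (hy : y ≠ 0) (hxy : x ⬝ᵥ y = 0) (hAxy : x ⬝ᵥ A *ᵥ y = 0)
    (hcx : c * (x ⬝ᵥ x) ≤ x ⬝ᵥ A *ᵥ x) (hcy : c * (y ⬝ᵥ y) ≤ y ⬝ᵥ A *ᵥ y) :
    c ≤ lambda2 A := by
  have hT := isSymmetric_toEuclideanLin_iff.mpr hA
  have hinner (u w : V → ℝ) : ⟪WithLp.toLp 2 u, WithLp.toLp 2 w⟫ = u ⬝ᵥ w := by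
    simp [EuclideanSpace.inner_eq_star_dotProduct, dotProduct_comm]
  have hquad (u w : V → ℝ) :
      ⟪toEuclideanLin A (WithLp.toLp 2 u), WithLp.toLp 2 w⟫ = w ⬝ᵥ A *ᵥ u := by
    simp [EuclideanSpace.inner_eq_star_dotProduct]
  have hnorm (u : V → ℝ) : ‖WithLp.toLp 2 u‖ ^ 2 = u ⬝ᵥ u := by
    rw [← real_inner_self_eq_norm_sq, hinner]
  have h1 : 1 < Fintype.card V := by
    have hli : LinearIndependent ℝ ![WithLp.toLp 2 x, WithLp.toLp 2 y] := by
      refine linearIndependent_of_ne_zero_of_inner_eq_zero ?_ ?_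
      · intro i; fin_cases i <;> simpa
      · intro i j hij
        fin_cases i <;> fin_cases j <;> simp_all [dotProduct_comm]
    simpa [Nat.lt_iff_add_one_le] using hli.fintype_card_le_finrank
  rw [hA.lambda2_eq_eigenvalues₀ h1]
  refine hT.le_eigenvalues_one_of_orthogonal finrank_euclideanSpace h1 (x := WithLp.toLp 2 y)
    (y := WithLp.toLp 2 x) (by simpa) (by simpa) ?_ ?_ ?_ ?_
  · rwa [hinner, dotProduct_comm]
  · rwa [hquad]
  · rwa [hnorm, hquad]
  · rwa [hnorm, hquad]

theorem le_lambda2_of_submatrix (hA : A.IsHermitian) {ι : Type*} [Fintype ι] {p : ι → V}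
    (hp : p.Injective) {x y : ι → ℝ} {c : ℝ} (hx : x ≠ 0) (hy : y ≠ 0) (hxy : x ⬝ᵥ y = 0)
    (hAxy : x ⬝ᵥ A.submatrix p p *ᵥ y = 0)
    (hcx : c * (x ⬝ᵥ x) ≤ x ⬝ᵥ A.submatrix p p *ᵥ x)
    (hcy : c * (y ⬝ᵥ y) ≤ y ⬝ᵥ A.submatrix p p *ᵥ y) :
    c ≤ lambda2 A := by
  have hdot (u w : ι → ℝ) : Function.extend p u 0 ⬝ᵥ Function.extend p w 0 = u ⬝ᵥ w := by
    rw [hp.extend_dotProduct]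
    congr 1; ext i; simp [hp.extend_apply]
  have hne (u : ι → ℝ) (hu : u ≠ 0) : Function.extend p u 0 ≠ 0 := fun h => hu <| by
    ext i; simpa [hp.extend_apply] using congrFun h (p i)
  refine hA.le_lambda2_of_orthogonal (hne x hx) (hne y hy) ?_ ?_ ?_ ?_ <;>
    simpa only [hdot, hp.extend_dotProduct_mulVec_extend]

end Matrix.IsHermitian

namespace SimpleGraph

variable {V : Type*} {G : SimpleGraph V} {u v w a b c z₁ z₂ : V}

theorem dist_eq_two_of_adj_of_adj (hne : u ≠ v) (huv : ¬G.Adj u v) (huw : G.Adj u w)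
    (hwv : G.Adj w v) : G.dist u v = 2 := by
  have h := (huw.reachable.trans hwv.reachable).coe_dist_eq_edist
  rw [edist_eq_two_iff.mpr ⟨hne, huv, w, G.mem_commonNeighbors.mpr ⟨huw, hwv.symm⟩⟩] at h
  exact_mod_cast h

theorem dist_eq_three_of_adj_of_adj_of_adj (huv : ¬G.Adj u v)
    (hcommon : ∀ w, G.Adj u w → ¬G.Adj w v) (hua : G.Adj u a) (hab : G.Adj a b)
    (hbv : G.Adj b v) : G.dist u v = 3 := by
  have hne : u ≠ v := by rintro rfl; exact hcommon a hua hua.symm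
  have hle : G.dist u v ≤ 3 := dist_le (.cons hua (.cons hab (.cons hbv .nil)))
  have hlt : 2 < G.edist u v := two_lt_edist_iff.mpr ⟨hne, huv, by
    ext w
    simp only [mem_commonNeighbors, Set.mem_empty_iff_false, iff_false, not_and]
    exact fun huw hvw => hcommon w huw hvw.symm⟩
  rw [← (hua.reachable.trans (hab.reachable.trans hbv.reachable)).coe_dist_eq_edist] at hlt
  have : 2 < G.dist u v := by exact_mod_cast hlt
  omega

theorem IsMaximumClique.exists_not_adj [Finite V] {K : Finset V} (hK : G.IsMaximumClique K)
    {z : V} (hz : z ∉ K) : ∃ c ∈ K, ¬G.Adj z c := by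
  by_contra! h
  exact hz (hK.isMaximalClique.mem_of_prop_insert (hK.isClique.insert fun c hc _ => h c hc))

variable [Fintype V]

theorem isHermitian_distMatrix : (distMatrix G).IsHermitian := by
  ext u v; simp [distMatrix, dist_comm]

theorem distMatrix_submatrix_eq {m : ℕ} {p : Fin m → V} {D : Matrix (Fin m) (Fin m) ℕ}
    (hD : D.IsSymm) (hdiag : ∀ i, D i i = 0) (h : ∀ i j, i < j → G.dist (p i) (p j) = D i j) :
    (distMatrix G).submatrix p p = D.map (↑) := by
  ext i j
  simp only [submatrix_apply, distMatrix, map_apply, Nat.cast_inj]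
  rcases lt_trichotomy i j with hij | rfl | hij
  · exact h i j hij
  · simp [hdiag]
  · rw [dist_comm, h j i hij, hD.apply]

variable [DecidableEq V]

theorem le_lambda2_distMatrix_of_dist_eq {m : ℕ} {p : Fin m → V}
    {D : Matrix (Fin m) (Fin m) ℕ} (hD : D.IsSymm) (hD0 : ∀ i j, D i j = 0 ↔ i = j)
    (h : ∀ i j, i < j → G.dist (p i) (p j) = D i j) {x y : Fin m → ℝ} {c : ℝ}
    (hx : x ≠ 0) (hy : y ≠ 0) (hxy : x ⬝ᵥ y = 0) (hDxy : x ⬝ᵥ D.map (↑) *ᵥ y = 0)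
    (hcx : c * (x ⬝ᵥ x) ≤ x ⬝ᵥ D.map (↑) *ᵥ x) (hcy : c * (y ⬝ᵥ y) ≤ y ⬝ᵥ D.map (↑) *ᵥ y) :
    c ≤ lambda2 (distMatrix G) := by
  have hsub := distMatrix_submatrix_eq hD (fun i => (hD0 i i).mpr rfl) h
  have hp : p.Injective := fun i j hij => (hD0 i j).mp <| by
    simpa [distMatrix, hij] using (congrFun₂ hsub i j).symm
  rw [← hsub] at hDxy hcx hcy
  exact isHermitian_distMatrix.le_lambda2_of_submatrix hp hx hy hxy hDxy hcx hcy

theorem neg_half_le_lambda2_of_no_common_neighbor (h₁₂ : ¬G.Adj z₁ z₂)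
    (hcommon : ∀ w, G.Adj z₁ w → ¬G.Adj w z₂) (hab : G.Adj a b)
    (hac : G.Adj a c) (hbc : G.Adj b c) (h₁a : G.Adj z₁ a) (h₁b : G.Adj z₁ b)
    (h₂c : G.Adj z₂ c) : -1/2 ≤ lambda2 (distMatrix G) := by
  have d₁₂ := dist_eq_three_of_adj_of_adj_of_adj h₁₂ hcommon h₁a hac h₂c.symm
  have d₁c := dist_eq_two_of_adj_of_adj (by rintro rfl; exact h₁₂ h₂c.symm)
    (fun h => hcommon c h h₂c.symm) h₁a hac
  have d₂a := dist_eq_two_of_adj_of_adj (by rintro rfl; exact h₁₂ h₁a)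
    (fun h => hcommon a h₁a h.symm) h₂c hac.symm
  have d₂b := dist_eq_two_of_adj_of_adj (by rintro rfl; exact h₁₂ h₁b)
    (fun h => hcommon b h₁b h.symm) h₂c hbc.symm
  refine le_lambda2_distMatrix_of_dist_eq (p := ![z₁, z₂, a, b, c])
    (D := !![0, 3, 1, 1, 2; 3, 0, 2, 2, 1; 1, 2, 0, 1, 1; 1, 2, 1, 0, 1; 2, 1, 1, 1, 0])
    (x := ![0, 1, 0, 0, 0]) (y := ![1, 0, -1, -1, 1]) (by decide) (by simp [Fin.forall_fin_succ])
    ?_ ?_ ?_ ?_ ?_ ?_ ?_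
  · intro i j hij
    fin_cases i <;> fin_cases j <;> simp_all [dist_eq_one_iff_adj, Fin.lt_def]
  all_goals norm_num [Fin.sum_univ_succ, dotProduct, mulVec]

theorem neg_half_le_lambda2_of_private_neighbors (hne : z₁ ≠ z₂)
    (h₁₂ : ¬G.Adj z₁ z₂) (h₁w : G.Adj z₁ w) (h₂w : G.Adj z₂ w) (hac : G.Adj a c)
    (h₁a : G.Adj z₁ a) (h₂c : G.Adj z₂ c) (h₁c : ¬G.Adj z₁ c) (h₂a : ¬G.Adj z₂ a) :
    -1/2 ≤ lambda2 (distMatrix G) := by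
  have d₁₂ := dist_eq_two_of_adj_of_adj hne h₁₂ h₁w h₂w.symm
  have d₁c := dist_eq_two_of_adj_of_adj (by rintro rfl; exact h₁₂ h₂c.symm) h₁c h₁a hac
  have d₂a := dist_eq_two_of_adj_of_adj (by rintro rfl; exact h₁₂ h₁a) h₂a h₂c hac.symm
  refine le_lambda2_distMatrix_of_dist_eq (p := ![z₁, z₂, a, c])
    (D := !![0, 2, 1, 2; 2, 0, 2, 1; 1, 2, 0, 1; 2, 1, 1, 0])
    (x := ![0, 1, 0, 0]) (y := ![1, 0, -2, 2]) (by decide) (by simp [Fin.forall_fin_succ])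
    ?_ ?_ ?_ ?_ ?_ ?_ ?_
  · intro i j hij
    fin_cases i <;> fin_cases j <;> simp_all [dist_eq_one_iff_adj, Fin.lt_def]
  all_goals norm_num [Fin.sum_univ_succ, dotProduct, mulVec]

theorem neg_half_le_lambda2_of_common_neighbors (hne : z₁ ≠ z₂)
    (h₁₂ : ¬G.Adj z₁ z₂) (hab : G.Adj a b) (hac : G.Adj a c) (hbc : G.Adj b c)
    (h₁a : G.Adj z₁ a) (h₁b : G.Adj z₁ b) (h₂a : G.Adj z₂ a) (h₂b : G.Adj z₂ b)
    (hc₁ : c ≠ z₁) (hc₂ : c ≠ z₂) (h₁c : ¬G.Adj z₁ c) (h₂c : ¬G.Adj z₂ c) :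
    -1/2 ≤ lambda2 (distMatrix G) := by
  have d₁₂ := dist_eq_two_of_adj_of_adj hne h₁₂ h₁a h₂a.symm
  have d₁c := dist_eq_two_of_adj_of_adj hc₁.symm h₁c h₁a hac
  have d₂c := dist_eq_two_of_adj_of_adj hc₂.symm h₂c h₂a hac
  refine le_lambda2_distMatrix_of_dist_eq (p := ![z₁, z₂, a, b, c])
    (D := !![0, 2, 1, 1, 2; 2, 0, 1, 1, 2; 1, 1, 0, 1, 1; 1, 1, 1, 0, 1; 2, 2, 1, 1, 0])
    (x := ![0, 0, 0, 0, 1]) (y := ![1, 1, -2, -2, 0]) (by decide) (by simp [Fin.forall_fin_succ])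
    ?_ ?_ ?_ ?_ ?_ ?_ ?_
  · intro i j hij
    fin_cases i <;> fin_cases j <;> simp_all [dist_eq_one_iff_adj, Fin.lt_def]
  all_goals norm_num [Fin.sum_univ_succ, dotProduct, mulVec]

variable [DecidableRel G.Adj]

theorem neg_half_le_lambda2_of_neighbors_subset {K : Finset V} (hK : G.IsClique (K : Set V))
    (hne : z₁ ≠ z₂) (h₁₂ : ¬G.Adj z₁ z₂) (hz₁ : z₁ ∉ K) (hz₂ : z₂ ∉ K)
    (hc₂ : ∃ c ∈ K, ¬G.Adj z₂ c) (h₁ : 2 ≤ (K.filter (fun x => G.Adj z₁ x)).card)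
    (hsub : ∀ x ∈ K, G.Adj z₁ x → G.Adj z₂ x) : -1/2 ≤ lambda2 (distMatrix G) := by
  obtain ⟨a, ha, b, hb, hab⟩ := Finset.one_lt_card.mp h₁
  rw [Finset.mem_filter] at ha hb
  obtain ⟨c, hc, h₂c⟩ := hc₂
  have hac : a ≠ c := by rintro rfl; exact h₂c (hsub a ha.1 ha.2)
  have hbc : b ≠ c := by rintro rfl; exact h₂c (hsub b hb.1 hb.2)
  exact neg_half_le_lambda2_of_common_neighbors hne h₁₂ (hK ha.1 hb.1 hab) (hK ha.1 hc hac)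
    (hK hb.1 hc hbc) ha.2 hb.2 (hsub a ha.1 ha.2) (hsub b hb.1 hb.2)
    (ne_of_mem_of_not_mem hc hz₁) (ne_of_mem_of_not_mem hc hz₂) (fun h => h₂c (hsub c hc h)) h₂c

theorem neg_half_le_lambda2_of_two_le_card_neighbors {K : Finset V}
    (hK : G.IsClique (K : Set V)) (hne : z₁ ≠ z₂) (h₁₂ : ¬G.Adj z₁ z₂)
    (hz₁ : z₁ ∉ K) (hz₂ : z₂ ∉ K) (hc₁ : ∃ c ∈ K, ¬G.Adj z₁ c) (hc₂ : ∃ c ∈ K, ¬G.Adj z₂ c)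
    (h₁ : 2 ≤ (K.filter (fun x => G.Adj z₁ x)).card)
    (h₂ : 2 ≤ (K.filter (fun x => G.Adj z₂ x)).card) : -1/2 ≤ lambda2 (distMatrix G) := by
  by_cases hsub₁ : ∀ x ∈ K, G.Adj z₁ x → G.Adj z₂ x
  · exact neg_half_le_lambda2_of_neighbors_subset hK hne h₁₂ hz₁ hz₂ hc₂ h₁ hsub₁
  by_cases hsub₂ : ∀ x ∈ K, G.Adj z₂ x → G.Adj z₁ x
  · exact neg_half_le_lambda2_of_neighbors_subset hK hne.symm (h₁₂ ·.symm) hz₂ hz₁ hc₁ h₂ hsub₂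
  push Not at hsub₁ hsub₂
  obtain ⟨a, ha, h₁a, h₂a⟩ := hsub₁
  obtain ⟨c, hc, h₂c, h₁c⟩ := hsub₂
  have hac : G.Adj a c := hK ha hc (by rintro rfl; exact h₁c h₁a)
  by_cases hcommon : ∃ w, G.Adj z₁ w ∧ G.Adj z₂ w
  · obtain ⟨w, h₁w, h₂w⟩ := hcommon
    exact neg_half_le_lambda2_of_private_neighbors hne h₁₂ h₁w h₂w hac h₁a h₂c h₁c h₂a
  · push Not at hcommon
    obtain ⟨a₁, ha₁, b₁, hb₁, hab₁⟩ := Finset.one_lt_card.mp h₁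
    rw [Finset.mem_filter] at ha₁ hb₁
    have hnc {x : V} (h₁x : G.Adj z₁ x) : x ≠ c := by rintro rfl; exact h₁c h₁x
    exact neg_half_le_lambda2_of_no_common_neighbor h₁₂ (fun w h₁w hw₂ => hcommon w h₁w hw₂.symm)
      (hK ha₁.1 hb₁.1 hab₁) (hK ha₁.1 hc (hnc ha₁.2)) (hK hb₁.1 hc (hnc hb₁.2)) ha₁.2 hb₁.2 h₂c

end SimpleGraph

theorem split_graph_at_most_one_big_indep_vertex_general {V : Type*} [Fintype V] [DecidableEq V]
    (G : SimpleGraph V) [DecidableRel G.Adj]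
    (K I : Finset V)
    (hclique : G.IsClique (K : Set V))
    (hmax : ∀ t : Finset V, G.IsClique (t : Set V) → t.card ≤ K.card)
    (hindep : ∀ x ∈ I, ∀ y ∈ I, ¬ G.Adj x y)
    (hdisj : Disjoint K I)
    (hl2 : lambda2 (distMatrix G) < -1/2) :
    (I.filter (fun z => 2 ≤ (K.filter (fun x => G.Adj z x)).card)).card ≤ 1 := by
  by_contra! h
  obtain ⟨z₁, hz₁, z₂, hz₂, hne⟩ := Finset.one_lt_card.mp h
  rw [Finset.mem_filter] at hz₁ hz₂
  have hnotK {z : V} (hz : z ∈ I) : z ∉ K := Finset.disjoint_right.mp hdisj hz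
  have hKmax : G.IsMaximumClique K := ⟨hclique, hmax⟩
  exact hl2.not_ge <| G.neg_half_le_lambda2_of_two_le_card_neighbors hclique hne
    (hindep _ hz₁.1 _ hz₂.1) (hnotK hz₁.1) (hnotK hz₂.1) (hKmax.exists_not_adj (hnotK hz₁.1))
    (hKmax.exists_not_adj (hnotK hz₂.1)) hz₁.2 hz₂.2

theorem split_graph_at_most_one_big_indep_vertex {V : Type*} [Fintype V] [DecidableEq V]
    (G : SimpleGraph V) [DecidableRel G.Adj] (hconn : G.Connected)
    (K I : Finset V)
    (hclique : G.IsClique (K : Set V))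
    (hmax : ∀ t : Finset V, G.IsClique (t : Set V) → t.card ≤ K.card)
    (hindep : ∀ x ∈ I, ∀ y ∈ I, ¬ G.Adj x y)
    (hdisj : Disjoint K I) (hunion : K ∪ I = Finset.univ)
    (hs : 3 ≤ K.card)
    (hl2 : lambda2 (distMatrix G) < -1/2) :
    (I.filter (fun z => 2 ≤ (K.filter (fun x => G.Adj z x)).card)).card ≤ 1 :=
  split_graph_at_most_one_big_indep_vertex_general G K I hclique hmax hindep hdisj hl2
end
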